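/- arXiv:2305.12658 — 2 statements merged into one kernel-verified Lean document; each statement's English description precedes it below -/
import Mathlib

section
/- Let Â = A + εB with Ind(Â) = k and set D = A^{k-1}B + A^{k-2}BA + ⋯ + ABA^{k-2} + BA^{k-1}. The dual Drazin generalized inverse of Â exists if and only if (I − AA^D) D (A^D A − I) = 0. Moreover, when it exists, Â^D = A^D + εR where R = −A^D B A^D + (A^D)^{k+1} D (I − AA^D) + (I − AA^D) D (A^D)^{k+1}. -/
open Matrix Finset

noncomputable section

/-- The dual matrix `A + εB` as a matrix over the dual numbers `ℝ[ε]/(ε²)`. -/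
def dmat {m : Type*} (A B : Matrix m m ℝ) : Matrix m m (DualNumber ℝ) :=
  Matrix.of fun i j => TrivSqZeroExt.inl (A i j) + TrivSqZeroExt.inr (B i j)

/-- `x` is a Drazin inverse of `a` with index parameter `k`
(for `k = 1` this is the group inverse). -/
def IsDrazin {R : Type*} [Monoid R] (k : ℕ) (a x : R) : Prop :=
  a ^ k * x * a = a ^ k ∧ x * a * x = x ∧ a * x = x * a

/-- `A` has index `k`: `k` is the smallest nonnegative integer with
`rank (A^k) = rank (A^(k+1))`. -/
def hasIndex {m : Type*} [Fintype m] [DecidableEq m] (A : Matrix m m ℝ) (k : ℕ) : Prop :=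
  (A ^ (k + 1)).rank = (A ^ k).rank ∧ ∀ j < k, (A ^ (j + 1)).rank ≠ (A ^ j).rank

/-- `D = A^{k-1} B + A^{k-2} B A + ⋯ + B A^{k-1}`. -/
def dsum {m : Type*} [Fintype m] [DecidableEq m] (A B : Matrix m m ℝ) (k : ℕ) :
    Matrix m m ℝ :=
  ∑ i ∈ Finset.range k, A ^ i * B * A ^ (k - 1 - i)


/-!
Pass to dual numbers over matrices, `Â = a + ε b`. If `x + ε r` is a Drazin inverse of `Â`, its
real part is a Drazin inverse of `a`, hence `x = a^D` by uniqueness; multiplying the `ε`-part of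
`Â^k X Â = Â^k` on the left by `1 - a a^D`, which annihilates `a^k`, yields the corner condition.
Conversely, the three `ε`-equations for the explicit `r` follow from `p = a a^D` being an
idempotent commuting with `a`, from `a^k (1 - p) = 0` and `a^k (a^D)^(k+1) = a^D`, from the corner
condition `(1 - p) d (1 - p) = 0` on the `ε`-part `d` of `Â^k`, and from the telescoping identity
`a d - d a = a^k b - b a^k`, which is the `ε`-part of `Â Â^k = Â^k Â`.
-/

/-- The `ε`-part `R` of the dual Drazin inverse `x + ε R` of `a + ε b`, where `d` stands for the
`ε`-part of `(a + ε b) ^ k`. -/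
def drazinDualPart {R : Type*} [Ring R] (k : ℕ) (a b x d : R) : R :=
  -(x * b * x) + x ^ (k + 1) * d * (1 - a * x) + (1 - a * x) * d * x ^ (k + 1)

namespace IsDrazin

section Monoid

variable {M : Type*} [Monoid M] {k : ℕ} {a x y : M}

theorem commute (h : IsDrazin k a x) : Commute a x := h.2.2

theorem mul_mul_self (h : IsDrazin k a x) : a * x * x = x := by
  rw [h.2.2]; exact h.2.1

theorem mul_mul_mul (h : IsDrazin k a x) : x * (a * x) = x := by
  rw [← mul_assoc]; exact h.2.1

theorem pow_mul_mul (h : IsDrazin k a x) : a ^ k * (a * x) = a ^ k := by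
  rw [h.2.2, ← mul_assoc]; exact h.1

theorem mul_mul_pow (h : IsDrazin k a x) : a * x * a ^ k = a ^ k := by
  rw [((Commute.self_pow a k).mul_left (h.commute.symm.pow_right k)).eq, h.pow_mul_mul]

theorem pow_succ_mul_pow (h : IsDrazin k a x) (m : ℕ) : x ^ (m + 1) * a ^ m = x := by
  induction m with
  | zero => simp
  | succ m ih =>
    calc x ^ (m + 2) * a ^ (m + 1) = x * (x ^ (m + 1) * a ^ m) * a := by
          rw [pow_succ' x (m + 1), pow_succ a m]; simp only [mul_assoc]
      _ = x := by rw [ih, mul_assoc, ← h.2.2, ← mul_assoc, h.2.1]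

theorem pow_mul_pow_succ (h : IsDrazin k a x) (m : ℕ) : a ^ m * x ^ (m + 1) = x :=
  (h.commute.pow_pow m (m + 1)).eq.trans (h.pow_succ_mul_pow m)

theorem unique (hx : IsDrazin k a x) (hy : IsDrazin k a y) : x = y := by
  have hxya : x = x * y * a :=
    calc x = x ^ (k + 1) * a ^ k := (hx.pow_succ_mul_pow k).symm
      _ = x ^ (k + 1) * (a ^ k * y * a) := by rw [hy.1]
      _ = x * y * a := by simp only [← mul_assoc, hx.pow_succ_mul_pow k]
  have hyxa : y = x * a * y :=
    calc y = a ^ k * y ^ (k + 1) := (hy.pow_mul_pow_succ k).symm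
      _ = a ^ k * x * a * y ^ (k + 1) := by rw [hx.1]
      _ = x * a * (a ^ k * y ^ (k + 1)) := by
          rw [(hx.commute.pow_left k).eq, mul_assoc x, ← pow_succ, pow_succ']
          simp only [mul_assoc]
      _ = x * a * y := by rw [hy.pow_mul_pow_succ k]
  rw [hxya, mul_assoc, ← hy.2.2, ← mul_assoc, ← hyxa]

end Monoid

section Ring

variable {R : Type*} [Ring R] {k : ℕ} {a x : R}

theorem one_sub_mul_mul_pow (h : IsDrazin k a x) : (1 - a * x) * a ^ k = 0 := by
  rw [sub_mul, one_mul, h.mul_mul_pow, sub_self]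

theorem pow_mul_one_sub_mul (h : IsDrazin k a x) : a ^ k * (1 - a * x) = 0 := by
  rw [mul_sub, mul_one, h.pow_mul_mul, sub_self]

variable {b d : R}

theorem mul_drazinDualPart_add (h : IsDrazin k a x)
    (hd : a * d + b * a ^ k = a ^ k * b + d * a) :
    a * drazinDualPart k a b x d + b * x = x * b + drazinDualPart k a b x d * a := by
  have hc := h.commute.eq
  have hAL : a * x ^ (k + 1) = x ^ (k + 1) * a := (h.commute.pow_right (k + 1)).eq
  have hd' : a * d - d * a = a ^ k * b - b * a ^ k := sub_eq_sub_iff_add_eq_add.2 hd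
  have key : a * drazinDualPart k a b x d - drazinDualPart k a b x d * a =
      x ^ (k + 1) * (a * d - d * a) * (1 - a * x) + (1 - a * x) * (a * d - d * a) * x ^ (k + 1)
        + x * b * (a * x) - a * x * b * x := by
    unfold drazinDualPart
    linear_combination (norm := noncomm_ring) hAL * (d * (1 - a * x)) - (x ^ (k + 1) * d * a) * hc
      - a * hc * (d * x ^ (k + 1)) + ((1 - a * x) * d) * hAL - (x * b) * hc
  rw [hd'] at key
  linear_combination (norm := noncomm_ring) key + (h.pow_succ_mul_pow k) * (b * (1 - a * x))
    - (x ^ (k + 1) * b) * h.pow_mul_one_sub_mul + h.one_sub_mul_mul_pow * (b * x ^ (k + 1))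
    - ((1 - a * x) * b) * (h.pow_mul_pow_succ k)

theorem mul_mul_drazinDualPart_add (h : IsDrazin k a x) :
    x * a * drazinDualPart k a b x d + (x * b + drazinDualPart k a b x d * a) * x =
      drazinDualPart k a b x d := by
  have hpp : a * x * (a * x) = a * x := by rw [mul_assoc, h.mul_mul_mul]
  have hpL : a * x * x ^ (k + 1) = x ^ (k + 1) := by
    rw [pow_succ', ← mul_assoc, h.mul_mul_self]
  have hLp : x ^ (k + 1) * (a * x) = x ^ (k + 1) := by
    rw [pow_succ, mul_assoc, h.mul_mul_mul]
  have hr : drazinDualPart k a b x d = -(x * b * x) + x ^ (k + 1) * d * (1 - a * x)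
      + (1 - a * x) * d * x ^ (k + 1) := rfl
  have hpr : a * x * drazinDualPart k a b x d = -(x * b * x) + x ^ (k + 1) * d * (1 - a * x) := by
    rw [hr]
    linear_combination (norm := noncomm_ring) -(h.mul_mul_self * (b * x)) + hpL * (d * (1 - a * x))
      - hpp * (d * x ^ (k + 1))
  have hrp :
      drazinDualPart k a b x d * (a * x) = -(x * b * x) + (1 - a * x) * d * x ^ (k + 1) := by
    rw [hr]
    linear_combination (norm := noncomm_ring) -((x * b) * h.mul_mul_mul) - (x ^ (k + 1) * d) * hpp
      + ((1 - a * x) * d) * hLp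
  linear_combination (norm := noncomm_ring)
    -(h.commute.eq * drazinDualPart k a b x d) + hpr + hrp - hr

theorem pow_mul_drazinDualPart_add (h : IsDrazin k a x)
    (hd : a * d + b * a ^ k = a ^ k * b + d * a)
    (hcorner : (1 - a * x) * d * (x * a - 1) = 0) :
    a ^ k * x * b + (a ^ k * drazinDualPart k a b x d + d * x) * a = d := by
  have hc := h.commute.eq
  have hK : a ^ k * x = x * a ^ k := (h.commute.pow_left k).eq
  have hd' : a * d - d * a = a ^ k * b - b * a ^ k := sub_eq_sub_iff_add_eq_add.2 hd
  -- the corner condition gives `d (1 - a x) = a x d (1 - a x)`, then `a d` is telescoped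
  have hdq : d * (1 - a * x) = x * d * (1 - a * x) * a + a ^ k * x * b * (1 - a * x) := by
    linear_combination (norm := noncomm_ring) -hcorner - ((1 - a * x) * d) * hc
      + hc * (d * (1 - a * x)) + x * hd' * (1 - a * x) - (x * d * a) * hc
      - hK * (b * (1 - a * x)) - (x * b) * h.pow_mul_one_sub_mul
  have hlhs : a ^ k * x * b + (a ^ k * drazinDualPart k a b x d + d * x) * a =
      a ^ k * x * b * (1 - a * x) + x * d * (1 - a * x) * a + d * (a * x) := by
    unfold drazinDualPart
    linear_combination (norm := noncomm_ring) (h.pow_mul_pow_succ k) * (d * (1 - a * x) * a)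
      + h.pow_mul_one_sub_mul * (d * x ^ (k + 1) * a) + (a ^ k * x * b) * hc - d * hc
  linear_combination (norm := noncomm_ring) hlhs - hdq

theorem one_sub_mul_mul_mul_sub_one (h : IsDrazin k a x) {r : R}
    (he : a ^ k * x * b + (a ^ k * r + d * x) * a = d) :
    (1 - a * x) * d * (x * a - 1) = 0 := by
  linear_combination (norm := noncomm_ring) (1 - a * x) * he
    - h.one_sub_mul_mul_pow * (x * b + r * a)

end Ring

end IsDrazin

theorem isDrazin_map_iff {M N F : Type*} [Monoid M] [Monoid N] [EquivLike F M N]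
    [MulEquivClass F M N] (f : F) {k : ℕ} {a x : M} :
    IsDrazin k (f a) (f x) ↔ IsDrazin k a x := by
  simp only [IsDrazin, ← map_pow, ← map_mul, EquivLike.apply_eq_iff_eq]

namespace DualNumber

open TrivSqZeroExt

variable {R : Type*} [Ring R] {k : ℕ}

theorem snd_inl_add_inr_pow (a b : R) (k : ℕ) :
    ((inl a + inr b : DualNumber R) ^ k).snd = ∑ i ∈ range k, a ^ i * b * a ^ (k - 1 - i) := by
  induction k with
  | zero => simp
  | succ k ih =>
    rw [pow_succ, snd_mul, ih, sum_range_succ, add_comm]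
    simp only [fst_pow, fst_add, fst_inl, fst_inr, add_zero, snd_add, snd_inl, snd_inr, zero_add,
      sum_mul, Nat.add_sub_cancel, Nat.sub_self, pow_zero, mul_one]
    refine congrArg (· + _) (sum_congr rfl fun i hi => ?_)
    rw [mul_assoc, ← pow_succ, show k - 1 - i + 1 = k - i by have := mem_range.1 hi; omega]

theorem fst_mul_snd_pow_add (A : DualNumber R) (k : ℕ) :
    A.fst * (A ^ k).snd + A.snd * A.fst ^ k = A.fst ^ k * A.snd + (A ^ k).snd * A.fst := by
  simpa using congrArg snd (Commute.self_pow A k).eq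

theorem isDrazin_iff {A X : DualNumber R} :
    IsDrazin k A X ↔ IsDrazin k A.fst X.fst ∧
      A.fst ^ k * X.fst * A.snd + (A.fst ^ k * X.snd + (A ^ k).snd * X.fst) * A.fst =
        (A ^ k).snd ∧
      X.fst * A.fst * X.snd + (X.fst * A.snd + X.snd * A.fst) * X.fst = X.snd ∧
      A.fst * X.snd + A.snd * X.fst = X.fst * A.snd + X.snd * A.fst := by
  simp only [IsDrazin, TrivSqZeroExt.ext_iff, fst_mul, snd_mul, fst_pow]
  tauto

theorem isDrazin_inl_add_inr_drazinDualPart {a b x : R} (h : IsDrazin k a x)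
    (hcorner : (1 - a * x) * ((inl a + inr b : DualNumber R) ^ k).snd * (x * a - 1) = 0) :
    IsDrazin k (inl a + inr b)
      (inl x + inr (drazinDualPart k a b x ((inl a + inr b : DualNumber R) ^ k).snd)) := by
  have hd := fst_mul_snd_pow_add (inl a + inr b : DualNumber R) k
  simp only [fst_add, fst_inl, fst_inr, snd_add, snd_inl, snd_inr, add_zero, zero_add] at hd
  refine isDrazin_iff.2 ⟨?_, ?_, ?_, ?_⟩ <;> simp only [fst_add, fst_inl, fst_inr, snd_add,
    snd_inl, snd_inr, add_zero, zero_add]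
  · exact h
  · exact h.pow_mul_drazinDualPart_add hd hcorner
  · exact h.mul_mul_drazinDualPart_add
  · exact h.mul_drazinDualPart_add hd

theorem exists_isDrazin_iff {a b x : R} (h : IsDrazin k a x) :
    (∃ X : DualNumber R, IsDrazin k (inl a + inr b) X) ↔
      (1 - a * x) * ((inl a + inr b : DualNumber R) ^ k).snd * (x * a - 1) = 0 := by
  refine ⟨fun ⟨X, hX⟩ => ?_,
    fun hcorner => ⟨_, isDrazin_inl_add_inr_drazinDualPart h hcorner⟩⟩
  obtain ⟨hfst, he, -, -⟩ := isDrazin_iff.1 hX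
  simp only [fst_add, fst_inl, fst_inr, snd_add, snd_inl, snd_inr, add_zero, zero_add] at hfst he
  rw [hfst.unique h] at he
  exact h.one_sub_mul_mul_mul_sub_one he

end DualNumber

theorem dualNumberEquiv_dmat {n : Type} [Fintype n] [DecidableEq n] (A B : Matrix n n ℝ) :
    Matrix.dualNumberEquiv (dmat A B) = TrivSqZeroExt.inl A + TrivSqZeroExt.inr B := by
  ext <;> simp [dmat]

open TrivSqZeroExt in
theorem ddgi_exists_iff_general {n k : ℕ} (A B AD : Matrix (Fin n) (Fin n) ℝ)
    (hAD : IsDrazin k A AD) :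
    ((∃ X : Matrix (Fin n) (Fin n) (DualNumber ℝ), IsDrazin k (dmat A B) X) ↔
      (1 - A * AD) * dsum A B k * (AD * A - 1) = 0) ∧
    ((∃ X : Matrix (Fin n) (Fin n) (DualNumber ℝ), IsDrazin k (dmat A B) X) →
      IsDrazin k (dmat A B)
        (dmat AD (-(AD * B * AD) + AD ^ (k + 1) * dsum A B k * (1 - A * AD) +
          (1 - A * AD) * dsum A B k * AD ^ (k + 1)))) := by
  have hpow : ((inl A + inr B : DualNumber (Matrix (Fin n) (Fin n) ℝ)) ^ k).snd = dsum A B k :=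
    DualNumber.snd_inl_add_inr_pow A B k
  have hexists : (∃ X, IsDrazin k (dmat A B) X) ↔ ∃ Y, IsDrazin k (inl A + inr B) Y := by
    rw [← dualNumberEquiv_dmat, Matrix.dualNumberEquiv.toEquiv.exists_congr_left]
    refine exists_congr fun Y => ?_
    rw [← isDrazin_map_iff (Matrix.dualNumberEquiv (R := ℝ) (n := Fin n))]
    simp only [AlgEquiv.toEquiv_eq_coe, AlgEquiv.symm_toEquiv_eq_symm, EquivLike.coe_coe,
      AlgEquiv.apply_symm_apply]
  have hiff := DualNumber.exists_isDrazin_iff (b := B) hAD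
  rw [hpow] at hiff
  refine ⟨hexists.trans hiff, fun hex => ?_⟩
  have hX := DualNumber.isDrazin_inl_add_inr_drazinDualPart (b := B) hAD
    (hpow ▸ hiff.1 (hexists.1 hex))
  rwa [hpow, ← dualNumberEquiv_dmat, ← dualNumberEquiv_dmat, isDrazin_map_iff] at hX

theorem ddgi_exists_iff {n k : ℕ} (A B AD : Matrix (Fin n) (Fin n) ℝ)
    (hk : hasIndex A k) (hAD : IsDrazin k A AD) :
    ((∃ X : Matrix (Fin n) (Fin n) (DualNumber ℝ), IsDrazin k (dmat A B) X) ↔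
      (1 - A * AD) * dsum A B k * (AD * A - 1) = 0) ∧
    ((∃ X : Matrix (Fin n) (Fin n) (DualNumber ℝ), IsDrazin k (dmat A B) X) →
      IsDrazin k (dmat A B)
        (dmat AD (-(AD * B * AD) + AD ^ (k + 1) * dsum A B k * (1 - A * AD) +
          (1 - A * AD) * dsum A B k * AD ^ (k + 1)))) :=
  ddgi_exists_iff_general A B AD hAD

end
end

section
/- Let Â = A + εB and Ĉ = C + εD be dual matrices of index 1 whose dual group inverses exist and are given by Â^# = A^# − ε A^# B A^# and Ĉ^# = C^# − ε C^# D C^#. If AC = CA, C^# B = B C^#, and A^# D = D A^#, then (ÂĈ)^# = Â^# Ĉ^# = Ĉ^# Â^#. -/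
open Matrix Finset

noncomputable section

/-! The group inverse is involutive, so `C` is the group inverse of `C^#`, and a group inverse
commutes with everything its element commutes with. Hence `C^# B = B C^#` gives `C B = B C`,
and likewise `A D = D A`; together with `A C = C A` this makes `Â` and `Ĉ` commute. In any monoid,
the product of the group inverses of two commuting elements is the group inverse of their product. -/

section GroupInverse

variable {M : Type*} [Monoid M] {a c x y : M}

theorem isDrazin_one_iff :
    IsDrazin 1 a x ↔ a * x * a = a ∧ x * a * x = x ∧ Commute a x := by
  rw [IsDrazin, pow_one]; rfl

theorem IsDrazin.symm (h : IsDrazin 1 a x) : IsDrazin 1 x a := by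
  obtain ⟨haxa, hxax, hax⟩ := isDrazin_one_iff.1 h
  exact isDrazin_one_iff.2 ⟨hxax, haxa, hax.symm⟩

theorem IsDrazin.commute_of_commute (h : IsDrazin 1 a x) (hy : Commute a y) :
    Commute x y := by
  obtain ⟨haxa, hxax, hax⟩ := isDrazin_one_iff.1 h
  have hxxa : x * x * a = x := by rw [mul_assoc, ← hax.eq, ← mul_assoc, hxax]
  have haxx : a * x * x = x := by rw [hax.eq, hxax]
  have hxxaa : x * x * (a * a) = x * a := by rw [← mul_assoc, hxxa]
  have haa : Commute (a * a) y := hy.mul_left hy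
  calc x * y = x * x * (a * y) := by rw [← mul_assoc, hxxa]
    _ = x * x * (y * (a * x * a)) := by rw [haxa, hy.eq]
    _ = x * x * ((a * a) * y) * x := by
      rw [mul_assoc a, ← hax.eq, ← mul_assoc a, ← mul_assoc y, ← haa.eq]
      simp only [mul_assoc]
    _ = x * a * y * x := by rw [← mul_assoc (x * x), hxxaa]
    _ = x * a * y * (a * x * x) := by rw [haxx]
    _ = (x * a) * (a * y) * x * x := by rw [hy.eq]; simp only [mul_assoc]
    _ = (a * x * a) * y * x * x := by rw [← hax.eq]; simp only [mul_assoc]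
    _ = y * x := by rw [haxa, hy.eq, mul_assoc y, mul_assoc y, haxx]

theorem IsDrazin.mul_of_commute (ha : IsDrazin 1 a x) (hc : IsDrazin 1 c y)
    (hac : Commute a c) : IsDrazin 1 (a * c) (x * y) := by
  obtain ⟨haxa, hxax, hax⟩ := isDrazin_one_iff.1 ha
  obtain ⟨hcyc, hycy, hcy⟩ := isDrazin_one_iff.1 hc
  have hxc : Commute x c := ha.commute_of_commute hac
  have hay : Commute a y := (hc.commute_of_commute hac.symm).symm
  have hxy : Commute x y := (hc.commute_of_commute hxc.symm).symm
  refine isDrazin_one_iff.2 ⟨?_, ?_, (hax.mul_right hay).mul_left (hxc.symm.mul_right hcy)⟩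
  · rw [hxc.symm.mul_mul_mul_comm, (hac.symm.mul_left hay.symm).mul_mul_mul_comm, haxa, hcyc]
  · rw [hay.symm.mul_mul_mul_comm, (hxy.symm.mul_left hxc.symm).mul_mul_mul_comm, hxax, hycy]

end GroupInverse

theorem dmat_mul {m : Type*} [Fintype m] (A B C D : Matrix m m ℝ) :
    dmat A B * dmat C D = dmat (A * C) (A * D + B * C) := by
  ext i j
  · simp [dmat, Matrix.mul_apply, TrivSqZeroExt.fst_sum]
  · simp [dmat, Matrix.mul_apply, TrivSqZeroExt.snd_sum, TrivSqZeroExt.snd_mul,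
      Finset.sum_add_distrib, mul_comm]

theorem dggi_reverse_forward_order_general {n : ℕ} (A B C D Ag Cg : Matrix (Fin n) (Fin n) ℝ)
    (hAg : IsDrazin 1 A Ag) (hCg : IsDrazin 1 C Cg)
    (hAh : IsDrazin 1 (dmat A B) (dmat Ag (-(Ag * B * Ag))))
    (hCh : IsDrazin 1 (dmat C D) (dmat Cg (-(Cg * D * Cg))))
    (h1 : A * C = C * A) (h2 : Cg * B = B * Cg) (h3 : Ag * D = D * Ag) :
    IsDrazin 1 (dmat A B * dmat C D)
      (dmat Ag (-(Ag * B * Ag)) * dmat Cg (-(Cg * D * Cg))) ∧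
    dmat Ag (-(Ag * B * Ag)) * dmat Cg (-(Cg * D * Cg)) =
      dmat Cg (-(Cg * D * Cg)) * dmat Ag (-(Ag * B * Ag)) := by
  have hCB : Commute C B := hCg.symm.commute_of_commute h2
  have hAD : Commute A D := hAg.symm.commute_of_commute h3
  have hcomm : Commute (dmat A B) (dmat C D) := by
    rw [Commute, SemiconjBy, dmat_mul, dmat_mul, h1, hAD.eq, hCB.eq, add_comm]
  have hXC : Commute (dmat Ag (-(Ag * B * Ag))) (dmat C D) := hAh.commute_of_commute hcomm
  exact ⟨hAh.mul_of_commute hCh hcomm, (hCh.commute_of_commute hXC.symm).symm.eq⟩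

theorem dggi_reverse_forward_order {n : ℕ} (A B C D Ag Cg : Matrix (Fin n) (Fin n) ℝ)
    (hAg : IsDrazin 1 A Ag) (hCg : IsDrazin 1 C Cg)
    (hAh : IsDrazin 1 (dmat A B) (dmat Ag (-(Ag * B * Ag))))
    (hCh : IsDrazin 1 (dmat C D) (dmat Cg (-(Cg * D * Cg))))
    (hex : ∃ Z : Matrix (Fin n) (Fin n) (DualNumber ℝ),
      IsDrazin 1 (dmat A B * dmat C D) Z)
    (h1 : A * C = C * A) (h2 : Cg * B = B * Cg) (h3 : Ag * D = D * Ag) :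
    IsDrazin 1 (dmat A B * dmat C D)
      (dmat Ag (-(Ag * B * Ag)) * dmat Cg (-(Cg * D * Cg))) ∧
    dmat Ag (-(Ag * B * Ag)) * dmat Cg (-(Cg * D * Cg)) =
      dmat Cg (-(Cg * D * Cg)) * dmat Ag (-(Ag * B * Ag)) :=
  dggi_reverse_forward_order_general A B C D Ag Cg hAg hCg hAh hCh h1 h2 h3
end
end
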